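/- arXiv:1904.07744 — 2 statements merged into one kernel-verified Lean document; each statement's English description precedes it below -/
import Mathlib

section
/- Let H₀, H₁, H₂ be Hilbert spaces and let d₀ : Dom(d₀) ⊆ H₀ → H₁ and d₁ : Dom(d₁) ⊆ H₁ → H₂ be closed densely defined operators with range(d₀) ⊆ ker(d₁). Suppose the associated Laplacian on H₁ (defined via the quadratic form ‖d₁ x‖² + ‖d₀* x‖²) has compact resolvent. Then range(d₀) is closed in H₁ and ker(d₁)/range(d₀) is finite dimensional. -/
/-!
Let `E := ker (R - 1)`; since `R = (L + 1)⁻¹`, this is `ker L`, the space of harmonic elements.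
As `R` is compact and symmetric, `E` is finite dimensional and, by the Fredholm alternative,
`R - 1` maps onto `Eᗮ`. A harmonic `x` satisfies `‖d₁ x‖² + ‖d₀† x‖² = ⟪L x, x⟫ = 0`, so
`range d₀ ⊥ E`. Conversely, if `y ∈ ker d₁ ∩ Eᗮ`, write `y = L u`. Testing against
`v ∈ Dom d₀†`, split along `ker d₁ ⊕ (ker d₁)ᗮ` with `(ker d₁)ᗮ ⊆ ker d₀†`, gives
`⟪y, v⟫ = ⟪d₀† u, d₀† v⟫`, i.e. `y = d₀†† (d₀† u) = d₀ (d₀† u)` since `d₀` is closed. Hence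
`range d₀ = ker d₁ ⊓ Eᗮ`, which is closed, and `ker d₁ / range d₀` embeds into `E`.
-/

open Module End
open scoped InnerProductSpace LinearPMap

theorem IsCompactOperator.exists_apply_sub_smul_eq_of_mem_orthogonal_eigenspace
    {𝕜 E : Type*} [RCLike 𝕜] [NormedAddCommGroup E] [InnerProductSpace 𝕜 E] [CompleteSpace E]
    {T : E →L[𝕜] E} (hT : IsCompactOperator T) (hTsymm : (T : E →ₗ[𝕜] E).IsSymmetric)
    {μ : 𝕜} (hμ : μ ≠ 0) {y : E} (hy : y ∈ (eigenspace (T : End 𝕜 E) μ)ᗮ) :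
    ∃ z, T z - μ • z = y := by
  set V := (eigenspace (T : End 𝕜 E) μ)ᗮ
  have hV : ∀ v ∈ V, T v ∈ V := hTsymm.invariant_orthogonalComplement_eigenspace μ
  set S : V →L[𝕜] V := T.restrict hV
  have hS : IsCompactOperator S := hT.restrict' (f := (T : E →ₗ[𝕜] E)) hV
  have hμS : ¬ HasEigenvalue (S : End 𝕜 V) μ := by
    intro h
    obtain ⟨v, hvμ, hv0⟩ := h.exists_hasEigenvector
    have hvT : (v : E) ∈ eigenspace (T : End 𝕜 E) μ := by
      rw [mem_genEigenspace_one] at hvμ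
      exact mem_eigenspace_iff.2 (congrArg Subtype.val hvμ)
    exact hv0 (Subtype.ext ((Submodule.orthogonal_disjoint _).le_bot ⟨hvT, v.2⟩))
  have hunit := (hS.hasEigenvalue_or_mem_resolventSet hμ).resolve_left hμS
  rw [spectrum.mem_resolventSet_iff, ContinuousLinearMap.isUnit_iff_bijective] at hunit
  obtain ⟨z, hz⟩ := hunit.2 ⟨-y, V.neg_mem hy⟩
  have hz' : μ • (z : E) - T z = -y := by simpa [S] using congrArg Subtype.val hz
  exact ⟨z, by rw [← neg_sub, hz', neg_neg]⟩

namespace LinearPMap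

section Kernel

variable {R E F G : Type*} [Ring R] [AddCommGroup E] [Module R E] [AddCommGroup F] [Module R F]
  [AddCommGroup G] [Module R G]

def ker (T : E →ₗ.[R] F) : Submodule R E := (LinearMap.ker T.toFun).map T.domain.subtype

theorem mem_ker {T : E →ₗ.[R] F} {x : E} : x ∈ T.ker ↔ ∃ hx : x ∈ T.domain, T ⟨x, hx⟩ = 0 := by
  simp [ker, LinearPMap.toFun_eq_coe]

theorem range_le_ker {T : E →ₗ.[R] F} {S : F →ₗ.[R] G}
    (h : ∀ x : T.domain, ∃ hx : T x ∈ S.domain, S ⟨T x, hx⟩ = 0) :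
    LinearMap.range T.toFun ≤ S.ker := by
  rintro _ ⟨x, rfl⟩
  exact mem_ker.2 (h x)

end Kernel

variable {𝕜 E F : Type*} [RCLike 𝕜] [NormedAddCommGroup E] [InnerProductSpace 𝕜 E]
  [NormedAddCommGroup F] [InnerProductSpace 𝕜 F]

theorem IsClosed.isClosed_ker {T : E →ₗ.[𝕜] F} (hT : T.IsClosed) :
    _root_.IsClosed (T.ker : Set E) := by
  have : (T.ker : Set E) = (fun x ↦ (x, (0 : F))) ⁻¹' T.graph := by
    ext x
    simp [mem_ker, mem_graph_iff]
  rw [this]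
  exact hT.preimage (continuous_id.prodMk continuous_const)

variable [CompleteSpace E]

theorem adjoint_eq_zero_of_mem_orthogonal_range {T : E →ₗ.[𝕜] F} (hT : Dense (T.domain : Set E))
    {v : F} (hv : v ∈ (LinearMap.range T.toFun)ᗮ) : ∃ hv' : v ∈ T†.domain, T† ⟨v, hv'⟩ = 0 := by
  have hinner : ∀ x : T.domain, ⟪(0 : E), x⟫_𝕜 = ⟪v, T x⟫_𝕜 := fun x ↦ by
    rw [inner_zero_left, ← toFun_eq_coe,
      Submodule.inner_left_of_mem_orthogonal (LinearMap.mem_range_self _ x) hv]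
  exact ⟨mem_adjoint_domain_of_exists v ⟨0, hinner⟩, adjoint_apply_eq hT _ hinner⟩

variable [CompleteSpace F]

/-- The inclusion `T†† ≤ T` for a closed `T`, in a form that does not need `T†` to be dense. -/
theorem IsClosed.mem_graph_of_forall_inner_adjoint {T : E →ₗ.[𝕜] F} (hT : Dense (T.domain : Set E))
    (hTc : T.IsClosed) {x : E} {y : F} (h : ∀ v : T†.domain, ⟪y, v⟫_𝕜 = ⟪x, T† v⟫_𝕜) :
    (x, y) ∈ T.graph := by
  set G : Submodule 𝕜 (WithLp 2 (E × F)) :=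
    T.graph.comap (WithLp.linearEquiv 2 𝕜 (E × F)).toLinearMap
  have hG : _root_.IsClosed (G : Set (WithLp 2 (E × F))) :=
    hTc.preimage (WithLp.prod_continuous_ofLp 2 E F)
  have : CompleteSpace G := hG.completeSpace_coe
  -- `(p, q) ⊥ graph T` says exactly `T† q = -p`.
  suffices WithLp.toLp 2 (x, y) ∈ Gᗮᗮ by rwa [G.orthogonal_orthogonal] at this
  rw [Submodule.mem_orthogonal]
  intro u hu
  set p := u.ofLp.1
  set q := u.ofLp.2
  have hpq : ∀ a : T.domain, ⟪-p, (a : E)⟫_𝕜 = ⟪q, T a⟫_𝕜 := fun a ↦ by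
    have haG : WithLp.toLp 2 ((a : E), T a) ∈ G := by simp [G]
    have h0 := Submodule.inner_left_of_mem_orthogonal haG hu
    rw [WithLp.prod_inner_apply] at h0
    rw [inner_neg_left]
    linear_combination -h0
  have hq : q ∈ T†.domain := mem_adjoint_domain_of_exists q ⟨-p, hpq⟩
  have hTq : T† ⟨q, hq⟩ = -p := adjoint_apply_eq hT _ hpq
  have hqy : ⟪q, y⟫_𝕜 = -⟪p, x⟫_𝕜 := by
    rw [← inner_conj_symm, h ⟨q, hq⟩, hTq, inner_conj_symm, inner_neg_left]
  rw [WithLp.prod_inner_apply, hqy, add_neg_cancel]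

end LinearPMap

theorem Submodule.finiteDimensional_quotient_comap_inf_orthogonal
    {𝕜 H : Type*} [RCLike 𝕜] [NormedAddCommGroup H] [InnerProductSpace 𝕜 H]
    (K E : Submodule 𝕜 H) [FiniteDimensional 𝕜 E] :
    FiniteDimensional 𝕜 (K ⧸ (K ⊓ Eᗮ).comap K.subtype) := by
  have hker : LinearMap.ker (E.orthogonalProjectionOnto.toLinearMap ∘ₗ K.subtype)
      = (K ⊓ Eᗮ).comap K.subtype := by
    rw [LinearMap.ker_comp, ker_orthogonalProjectionOnto,
      comap_inf, comap_subtype_self, top_inf_eq]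
  exact Module.Finite.equiv ((hker ▸ LinearMap.quotKerEquivRange _).symm)

section HilbertComplex

variable {𝕜 H₀ H₁ H₂ : Type*} [RCLike 𝕜]
  [NormedAddCommGroup H₀] [InnerProductSpace 𝕜 H₀] [CompleteSpace H₀]
  [NormedAddCommGroup H₁] [InnerProductSpace 𝕜 H₁]
  [NormedAddCommGroup H₂] [InnerProductSpace 𝕜 H₂]

/-- `L` is (a restriction of) the operator of the form `‖d₁ x‖² + ‖d₀† x‖²` on
`Dom d₁ ∩ Dom d₀†`. -/
structure IsFormLaplacian (d₀ : H₀ →ₗ.[𝕜] H₁) (d₁ : H₁ →ₗ.[𝕜] H₂) (L : H₁ →ₗ.[𝕜] H₁) :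
    Prop where
  mem_domain : ∀ x : L.domain, (x : H₁) ∈ d₁.domain ∧ (x : H₁) ∈ d₀†.domain
  inner_apply : ∀ (x : L.domain) (y : H₁) (hy₁ : y ∈ d₁.domain) (hy₂ : y ∈ d₀†.domain),
    ⟪L x, y⟫_𝕜 =
      ⟪d₁ ⟨x, (mem_domain x).1⟩, d₁ ⟨y, hy₁⟩⟫_𝕜 + ⟪d₀† ⟨x, (mem_domain x).2⟩, d₀† ⟨y, hy₂⟩⟫_𝕜

namespace IsFormLaplacian

variable {d₀ : H₀ →ₗ.[𝕜] H₁} {d₁ : H₁ →ₗ.[𝕜] H₂} {L : H₁ →ₗ.[𝕜] H₁} {R : H₁ →L[𝕜] H₁}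

theorem inner_apply_comm (hL : IsFormLaplacian d₀ d₁ L) (x y : L.domain) :
    ⟪L x, y⟫_𝕜 = ⟪(x : H₁), L y⟫_𝕜 := by
  rw [hL.inner_apply x y (hL.mem_domain y).1 (hL.mem_domain y).2, ← inner_conj_symm (x : H₁),
    hL.inner_apply y x (hL.mem_domain x).1 (hL.mem_domain x).2]
  simp only [map_add, inner_conj_symm]

theorem isSymmetric_resolvent (hL : IsFormLaplacian d₀ d₁ L)
    (hRmem : ∀ x : H₁, R x ∈ L.domain) (hR : ∀ x : H₁, L ⟨R x, hRmem x⟩ + R x = x) :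
    (R : H₁ →ₗ[𝕜] H₁).IsSymmetric := by
  intro x y
  calc ⟪R x, y⟫_𝕜 = ⟪R x, L ⟨R y, hRmem y⟩ + R y⟫_𝕜 := by rw [hR]
    _ = ⟪L ⟨R x, hRmem x⟩ + R x, R y⟫_𝕜 := by
      rw [inner_add_right, inner_add_left, hL.inner_apply_comm ⟨R x, hRmem x⟩ ⟨R y, hRmem y⟩]
    _ = ⟪x, R y⟫_𝕜 := by rw [hR]

theorem adjoint_eq_zero_of_apply_eq_zero (hL : IsFormLaplacian d₀ d₁ L) {u : L.domain}
    (hu : L u = 0) : d₀† ⟨u, (hL.mem_domain u).2⟩ = 0 := by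
  have hform := hL.inner_apply u u (hL.mem_domain u).1 (hL.mem_domain u).2
  rw [hu, inner_zero_left, inner_self_eq_norm_sq_to_K, inner_self_eq_norm_sq_to_K] at hform
  have hsum : (0 : ℝ) = ‖d₁ ⟨u, (hL.mem_domain u).1⟩‖ ^ 2 + ‖d₀† ⟨u, (hL.mem_domain u).2⟩‖ ^ 2 := by
    exact_mod_cast hform
  have hsq : ‖d₀† ⟨u, (hL.mem_domain u).2⟩‖ ^ 2 = 0 :=
    le_antisymm (by linarith [sq_nonneg ‖d₁ ⟨u, (hL.mem_domain u).1⟩‖]) (sq_nonneg _)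
  exact norm_eq_zero.1 (pow_eq_zero_iff two_ne_zero |>.1 hsq)

theorem range_le_orthogonal_eigenspace (hL : IsFormLaplacian d₀ d₁ L)
    (hd₀ : Dense (d₀.domain : Set H₀))
    (hRmem : ∀ x : H₁, R x ∈ L.domain) (hR : ∀ x : H₁, L ⟨R x, hRmem x⟩ + R x = x) :
    LinearMap.range d₀.toFun ≤ (eigenspace (R : End 𝕜 H₁) 1)ᗮ := by
  rintro _ ⟨w, rfl⟩
  rw [Submodule.mem_orthogonal]
  intro x hx
  have hRx : R x = x := by simpa using mem_eigenspace_iff.1 hx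
  set u : L.domain := ⟨R x, hRmem x⟩
  have hLu : L u = 0 := by rw [← add_right_cancel_iff (a := R x), hR, hRx, zero_add]
  calc ⟪x, d₀.toFun w⟫_𝕜 = ⟪d₀† ⟨u, (hL.mem_domain u).2⟩, w⟫_𝕜 := by
        rw [LinearPMap.adjoint_isFormalAdjoint hd₀, LinearPMap.toFun_eq_coe]
        exact congrArg (⟪·, d₀ w⟫_𝕜) hRx.symm
    _ = 0 := by rw [hL.adjoint_eq_zero_of_apply_eq_zero hLu, inner_zero_left]

variable [CompleteSpace H₁]

theorem inner_apply_eq_inner_adjoint (hL : IsFormLaplacian d₀ d₁ L)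
    (hd₀ : Dense (d₀.domain : Set H₀)) (hd₁c : d₁.IsClosed)
    (hcomplex : ∀ x : d₀.domain, ∃ h : d₀ x ∈ d₁.domain, d₁ ⟨d₀ x, h⟩ = 0)
    {u : L.domain} (hu : L u ∈ d₁.ker) (v : d₀†.domain) :
    ⟪L u, v⟫_𝕜 = ⟪d₀† ⟨u, (hL.mem_domain u).2⟩, d₀† v⟫_𝕜 := by
  have : CompleteSpace d₁.ker := hd₁c.isClosed_ker.completeSpace_coe
  obtain ⟨v₁, hv₁, v₂, hv₂, hv⟩ := d₁.ker.exists_add_mem_mem_orthogonal (v : H₁)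
  obtain ⟨hv₂dom, hv₂zero⟩ := LinearPMap.adjoint_eq_zero_of_mem_orthogonal_range hd₀
    (Submodule.orthogonal_le (LinearPMap.range_le_ker hcomplex) hv₂)
  have hv₁dom : v₁ ∈ d₀†.domain := by
    rw [eq_sub_of_add_eq hv.symm]
    exact d₀†.domain.sub_mem v.2 hv₂dom
  have hsplit : v = ⟨v₁, hv₁dom⟩ + ⟨v₂, hv₂dom⟩ := Subtype.ext hv
  obtain ⟨hv₁d₁, hv₁zero⟩ := LinearPMap.mem_ker.1 hv₁
  rw [hsplit, LinearPMap.map_add, hv₂zero, add_zero, Submodule.coe_add, inner_add_right,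
    Submodule.inner_right_of_mem_orthogonal hu hv₂, add_zero, hL.inner_apply u v₁ hv₁d₁ hv₁dom,
    hv₁zero, inner_zero_right, zero_add]

theorem ker_inf_orthogonal_eigenspace_le_range (hL : IsFormLaplacian d₀ d₁ L)
    (hd₀ : Dense (d₀.domain : Set H₀)) (hd₀c : d₀.IsClosed) (hd₁c : d₁.IsClosed)
    (hcomplex : ∀ x : d₀.domain, ∃ h : d₀ x ∈ d₁.domain, d₁ ⟨d₀ x, h⟩ = 0)
    (hRmem : ∀ x : H₁, R x ∈ L.domain) (hR : ∀ x : H₁, L ⟨R x, hRmem x⟩ + R x = x)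
    (hRc : IsCompactOperator R) :
    d₁.ker ⊓ (eigenspace (R : End 𝕜 H₁) 1)ᗮ ≤ LinearMap.range d₀.toFun := by
  rintro y ⟨hyK, hyE⟩
  obtain ⟨z, hz⟩ := hRc.exists_apply_sub_smul_eq_of_mem_orthogonal_eigenspace
    (hL.isSymmetric_resolvent hRmem hR) one_ne_zero hyE
  set u : L.domain := ⟨R (-z), hRmem (-z)⟩
  have hLu : L u = y := by
    rw [← hz, one_smul]
    linear_combination (norm := module) hR (-z) - map_neg R z
  have hgraph : ((d₀† ⟨u, (hL.mem_domain u).2⟩ : H₀), y) ∈ d₀.graph :=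
    hd₀c.mem_graph_of_forall_inner_adjoint hd₀ fun v ↦ by
      rw [← hLu, hL.inner_apply_eq_inner_adjoint hd₀ hd₁c hcomplex (hLu ▸ hyK)]
  obtain ⟨x, -, hx⟩ := d₀.mem_graph_iff.1 hgraph
  exact ⟨x, by rw [LinearPMap.toFun_eq_coe, hx]⟩

end IsFormLaplacian

end HilbertComplex

theorem stmt2_general
    {H₀ H₁ H₂ : Type*}
    [NormedAddCommGroup H₀] [InnerProductSpace ℂ H₀] [CompleteSpace H₀]
    [NormedAddCommGroup H₁] [InnerProductSpace ℂ H₁] [CompleteSpace H₁]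
    [NormedAddCommGroup H₂] [InnerProductSpace ℂ H₂]
    (d₀ : H₀ →ₗ.[ℂ] H₁) (d₁ : H₁ →ₗ.[ℂ] H₂)
    (hd₀dense : Dense (d₀.domain : Set H₀))
    (hd₀closed : d₀.IsClosed) (hd₁closed : d₁.IsClosed)
    -- `range d₀ ⊆ ker d₁`:
    (hcomplex : ∀ x : d₀.domain, ∃ h : d₀ x ∈ d₁.domain, d₁ ⟨d₀ x, h⟩ = 0)
    -- the Laplacian `L`, a self-adjoint operator with form domain `Dom d₁ ∩ Dom d₀*`:
    (L : H₁ →ₗ.[ℂ] H₁)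
    (hLdom : ∀ x : L.domain, (x : H₁) ∈ d₁.domain ∧ (x : H₁) ∈ d₀.adjoint.domain)
    (hLform : ∀ (x : L.domain) (y : H₁) (hy₁ : y ∈ d₁.domain)
      (hy₂ : y ∈ d₀.adjoint.domain),
      (inner ℂ (L x) y : ℂ) =
        inner ℂ (d₁ ⟨(x : H₁), (hLdom x).1⟩) (d₁ ⟨y, hy₁⟩) +
        inner ℂ (d₀.adjoint ⟨(x : H₁), (hLdom x).2⟩) (d₀.adjoint ⟨y, hy₂⟩))
    -- `L` has compact resolvent `R = (L + 1)⁻¹`: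
    (R : H₁ →L[ℂ] H₁)
    (hRmem : ∀ x : H₁, R x ∈ L.domain)
    (hR : ∀ x : H₁, L ⟨R x, hRmem x⟩ + R x = x)
    (hRcompact : IsCompactOperator R) :
    IsClosed ((LinearMap.range d₀.toFun : Submodule ℂ H₁) : Set H₁) ∧
    FiniteDimensional ℂ
      ((Submodule.map d₁.domain.subtype (LinearMap.ker d₁.toFun)) ⧸
        (Submodule.comap
          (Submodule.map d₁.domain.subtype (LinearMap.ker d₁.toFun)).subtype
          (LinearMap.range d₀.toFun))) := by
  have hL : IsFormLaplacian d₀ d₁ L := ⟨hLdom, hLform⟩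
  have hrange : LinearMap.range d₀.toFun = d₁.ker ⊓ (eigenspace (R : End ℂ H₁) 1)ᗮ :=
    le_antisymm
      (le_inf (LinearPMap.range_le_ker hcomplex)
        (hL.range_le_orthogonal_eigenspace hd₀dense hRmem hR))
      (hL.ker_inf_orthogonal_eigenspace_le_range hd₀dense hd₀closed hd₁closed hcomplex
        hRmem hR hRcompact)
  have : FiniteDimensional ℂ (eigenspace (R : End ℂ H₁) 1) :=
    R.finite_dimensional_eigenspace hRcompact 1 one_ne_zero
  rw [hrange]
  exact ⟨hd₁closed.isClosed_ker.inter (Submodule.isClosed_orthogonal _),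
    Submodule.finiteDimensional_quotient_comap_inf_orthogonal d₁.ker _⟩

/-- Let `H₀, H₁, H₂` be Hilbert spaces and `d₀ : Dom(d₀) ⊆ H₀ → H₁`,
`d₁ : Dom(d₁) ⊆ H₁ → H₂` closed densely defined operators with `range d₀ ⊆ ker d₁`.
Suppose the Laplacian `L` on `H₁` (the self-adjoint operator associated to the quadratic
form `‖d₁ x‖² + ‖d₀* x‖²` on `Dom(d₁) ∩ Dom(d₀*)`) has compact resolvent.  Then
`range d₀` is closed in `H₁` and `ker d₁ / range d₀` is finite dimensional. -/
theorem stmt2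
    {H₀ H₁ H₂ : Type*}
    [NormedAddCommGroup H₀] [InnerProductSpace ℂ H₀] [CompleteSpace H₀]
    [NormedAddCommGroup H₁] [InnerProductSpace ℂ H₁] [CompleteSpace H₁]
    [NormedAddCommGroup H₂] [InnerProductSpace ℂ H₂] [CompleteSpace H₂]
    (d₀ : H₀ →ₗ.[ℂ] H₁) (d₁ : H₁ →ₗ.[ℂ] H₂)
    (hd₀dense : Dense (d₀.domain : Set H₀)) (hd₁dense : Dense (d₁.domain : Set H₁))
    (hd₀closed : d₀.IsClosed) (hd₁closed : d₁.IsClosed)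
    -- `range d₀ ⊆ ker d₁`:
    (hcomplex : ∀ x : d₀.domain, ∃ h : d₀ x ∈ d₁.domain, d₁ ⟨d₀ x, h⟩ = 0)
    -- the Laplacian `L`, a self-adjoint operator with form domain `Dom d₁ ∩ Dom d₀*`:
    (L : H₁ →ₗ.[ℂ] H₁) (hLsa : IsSelfAdjoint L)
    (hLdom : ∀ x : L.domain, (x : H₁) ∈ d₁.domain ∧ (x : H₁) ∈ d₀.adjoint.domain)
    (hLform : ∀ (x : L.domain) (y : H₁) (hy₁ : y ∈ d₁.domain)
      (hy₂ : y ∈ d₀.adjoint.domain),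
      (inner ℂ (L x) y : ℂ) =
        inner ℂ (d₁ ⟨(x : H₁), (hLdom x).1⟩) (d₁ ⟨y, hy₁⟩) +
        inner ℂ (d₀.adjoint ⟨(x : H₁), (hLdom x).2⟩) (d₀.adjoint ⟨y, hy₂⟩))
    -- `L` has compact resolvent `R = (L + 1)⁻¹`:
    (R : H₁ →L[ℂ] H₁)
    (hRmem : ∀ x : H₁, R x ∈ L.domain)
    (hR : ∀ x : H₁, L ⟨R x, hRmem x⟩ + R x = x)
    (hR' : ∀ x : L.domain, R (L x + (x : H₁)) = x)
    (hRcompact : IsCompactOperator R) :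
    IsClosed ((LinearMap.range d₀.toFun : Submodule ℂ H₁) : Set H₁) ∧
    FiniteDimensional ℂ
      ((Submodule.map d₁.domain.subtype (LinearMap.ker d₁.toFun)) ⧸
        (Submodule.comap
          (Submodule.map d₁.domain.subtype (LinearMap.ker d₁.toFun)).subtype
          (LinearMap.range d₀.toFun))) :=
  stmt2_general d₀ d₁ hd₀dense hd₀closed hd₁closed hcomplex L hLdom hLform R hRmem hR hRcompact
end

section
/- Let T* be a cochain complex of Hilbert spaces of the form T^k = H^k ⊕ A^{k-1} (with A^{-1} = 0), where H* carries a closed densely defined differential ∂ and A* are finite-dimensional. Let γ : Dom(∂^k) → A^k be linear maps with γ ∘ ∂ = 0. Define two differentials: d̃(ω,a) = (∂ω, γ(ω)) and d(ω,a) = (∂ω, γ(P ω)), where P is the orthogonal projection onto ker(Δ^k) = ker(∂^k) ∩ ker((∂^{k-1})*), assuming a Hodge decomposition Dom(∂^k) = ker(Δ^k) ⊕ im(∂^{k-1}) ⊕ (Dom(∂^k) ∩ im(∂*^k)) holds with im(∂^{k-1}) closed. Then the map m(h, ω₁, ω₂, a) = (h, ω₁, ω₂, a + γ(I⁻¹ ω₁)),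 where I is the isomorphism im(∂*) ∩ Dom(∂) → im(∂) induced by ∂, is a cochain isomorphism from (T, d) to (T, d̃). -/
/-!
Write `ω = h + r + s` along the Hodge decomposition. Then `P ω = h`, and `γ r = 0` because `r` is
exact and `γ ∘ ∂ = 0`. Since `h` and `r` are closed, `∂ω = ∂s ∈ im ∂`; as `∂` is injective on
the summand `S` (a closed element of `S` is orthogonal to `im ∂`, hence harmonic, hence orthogonal
to itself), `I⁻¹ ∂ω = s`. So `γ (P ω) + γ (I⁻¹ ∂ω) = γ h + γ s = γ ω`: `m` intertwines `d` and
`d̃`. It is bijective, being a shear `(ω, a) ↦ (ω, a + f ω)`.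
-/

open Submodule LinearMap

section Complex

variable {𝕜 : Type*} [Semiring 𝕜] {H : ℕ → Type*} [∀ k, AddCommMonoid (H k)]
  [∀ k, Module 𝕜 (H k)] {Dom R : ∀ k, Submodule 𝕜 (H k)} {D : ∀ k, Dom k →ₗ[𝕜] Dom (k + 1)}

theorem range_le_dom (hR0 : R 0 = ⊥)
    (hR : ∀ k, R (k + 1) = map (Dom (k + 1)).subtype (range (D k))) (k : ℕ) : R k ≤ Dom k := by
  cases k with
  | zero => exact hR0 ▸ bot_le
  | succ j => exact hR j ▸ map_subtype_le _ _

theorem map_eq_zero_of_mem_range (hR0 : R 0 = ⊥)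
    (hR : ∀ k, R (k + 1) = map (Dom (k + 1)).subtype (range (D k)))
    {M : ℕ → Type*} [∀ k, AddCommMonoid (M k)] [∀ k, Module 𝕜 (M k)]
    (F : ∀ k, Dom k →ₗ[𝕜] M k) (hF : ∀ k x, F (k + 1) (D k x) = 0)
    (k : ℕ) (x : Dom k) (hx : (x : H k) ∈ R k) : F k x = 0 := by
  cases k with
  | zero =>
    rw [hR0, mem_bot] at hx
    rw [show x = 0 from Subtype.ext hx, map_zero]
  | succ j =>
    rw [hR j] at hx
    obtain ⟨z, ⟨y, rfl⟩, hz⟩ := hx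
    rw [← Subtype.ext hz]
    exact hF j y

end Complex

section Hodge

variable {𝕜 E V : Type*} [RCLike 𝕜] [NormedAddCommGroup E] [InnerProductSpace 𝕜 E]
  [AddCommGroup V] [Module 𝕜 V]

theorem eq_of_mem_of_sub_mem_orthogonal {K : Submodule 𝕜 E} {x a b : E} (ha : a ∈ K)
    (hb : b ∈ K) (hxa : x - a ∈ Kᗮ) (hxb : x - b ∈ Kᗮ) : a = b := by
  have hab : a - b ∈ K ⊓ Kᗮ :=
    ⟨K.sub_mem ha hb, by simpa using Kᗮ.sub_mem hxb hxa⟩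
  rwa [K.inf_orthogonal_eq_bot, mem_bot, sub_eq_zero] at hab

theorem projection_hodge_sum_eq {K R S : Submodule 𝕜 E} (hKR : K ≤ Rᗮ)
    (hSK : ∀ x ∈ S, ∀ y ∈ K, inner 𝕜 x y = 0) (P : E → E) (hPmem : ∀ x, P x ∈ K)
    (hPorth : ∀ x, x - P x ∈ Kᗮ) {h r s : E} (hh : h ∈ K) (hr : r ∈ R) (hs : s ∈ S) :
    P (h + r + s) = h := by
  refine eq_of_mem_of_sub_mem_orthogonal (hPmem _) hh (hPorth _) ?_
  rw [add_assoc, add_sub_cancel_left]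
  exact Kᗮ.add_mem ((R.le_orthogonal_orthogonal.trans (orthogonal_le hKR)) hr)
    ((K.mem_orthogonal' s).2 (hSK s hs))

variable {Dom R K S : Submodule 𝕜 E} {D : Dom →ₗ[𝕜] V}

theorem map_eq_zero_of_mem_harmonic (hK : K = map Dom.subtype (ker D) ⊓ Rᗮ) {x : Dom}
    (hx : (x : E) ∈ K) : D x = 0 := by
  rw [hK] at hx
  obtain ⟨y, hy, hyx⟩ := hx.1
  rwa [← Subtype.ext hyx]

theorem eq_of_map_eq_of_mem_coexact (hK : K = map Dom.subtype (ker D) ⊓ Rᗮ)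
    (hSK : ∀ x ∈ S, ∀ y ∈ K, inner 𝕜 x y = 0) (hSR : ∀ x ∈ S, ∀ y ∈ R, inner 𝕜 x y = 0)
    {u v : Dom} (hu : (u : E) ∈ S) (hv : (v : E) ∈ S) (huv : D u = D v) : u = v := by
  have hS : ((u - v : Dom) : E) ∈ S := S.sub_mem hu hv
  have hK' : ((u - v : Dom) : E) ∈ K := by
    rw [hK]
    exact ⟨⟨u - v, by simp [huv], rfl⟩, (R.mem_orthogonal' _).2 (hSR _ hS)⟩
  have := hSK _ hS _ hK'
  rwa [inner_self_eq_zero, coe_eq_zero, sub_eq_zero] at this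

end Hodge

theorem stmt7_general
    (H A : ℕ → Type*)
    [∀ k, NormedAddCommGroup (H k)] [∀ k, InnerProductSpace ℂ (H k)]
    [∀ k, AddCommGroup (A k)] [∀ k, Module ℂ (A k)]
    (Dom : ∀ k, Submodule ℂ (H k))
    (D : ∀ k, (Dom k : Submodule ℂ (H k)) →ₗ[ℂ] (Dom (k + 1) : Submodule ℂ (H (k + 1))))
    (hcomplex : ∀ k (x : Dom k), D (k + 1) (D k x) = 0)
    (γ : ∀ k, (Dom k : Submodule ℂ (H k)) →ₗ[ℂ] A k)
    (hγ : ∀ k (x : Dom k), γ (k + 1) (D k x) = 0)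
    -- `R k = im ∂ᵏ⁻¹ ⊆ H k`, a closed subspace:
    (R : ∀ k, Submodule ℂ (H k)) (hR0 : R 0 = ⊥)
    (hR : ∀ k, R (k + 1) =
      Submodule.map (Dom (k + 1)).subtype (LinearMap.range (D k)))
    -- `K k = ker Δᵏ = ker ∂ᵏ ∩ (im ∂ᵏ⁻¹)ᗮ`:
    (K : ∀ k, Submodule ℂ (H k))
    (hK : ∀ k, K k = Submodule.map (Dom k).subtype (LinearMap.ker (D k)) ⊓ (R k)ᗮ)
    (hKDom : ∀ k, ((K k : Submodule ℂ (H k)) : Set (H k)) ⊆ (Dom k : Set (H k)))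
    -- `S k = Dom ∂ᵏ ∩ im ∂*`, the third Hodge summand:
    (S : ∀ k, Submodule ℂ (H k))
    (hSDom : ∀ k, ((S k : Submodule ℂ (H k)) : Set (H k)) ⊆ (Dom k : Set (H k)))
    (hSK : ∀ k, ∀ x ∈ S k, ∀ y ∈ K k, (inner ℂ x y : ℂ) = 0)
    (hSR : ∀ k, ∀ x ∈ S k, ∀ y ∈ R k, (inner ℂ x y : ℂ) = 0)
    -- the Hodge decomposition `Dom ∂ᵏ = K ⊕ R ⊕ S`:
    (hHodge : ∀ k, ∀ x ∈ Dom k,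
      ∃ h ∈ K k, ∃ r ∈ R k, ∃ s ∈ S k, x = h + r + s)
    -- `P k` is the orthogonal projection onto `K k = ker Δᵏ`:
    (P : ∀ k, H k →L[ℂ] H k)
    (hPmem : ∀ k (x : H k), P k x ∈ K k)
    (hPorth : ∀ k (x : H k), x - P k x ∈ (K k)ᗮ)
    -- `PR k` is the orthogonal projection onto `R k = im ∂`:
    (PR : ∀ k, H k →L[ℂ] H k)
    (hPRmem : ∀ k (x : H k), PR k x ∈ R k)
    (hPRorth : ∀ k (x : H k), x - PR k x ∈ (R k)ᗮ)
    -- `ι k = I⁻¹`, the inverse of the isomorphism `I : S k → R (k+1)` induced by `∂`: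
    (ι : ∀ k, H (k + 1) →ₗ[ℂ] (Dom k : Submodule ℂ (H k)))
    (hι : ∀ k (y : H (k + 1)), y ∈ R (k + 1) →
      ((ι k y : H k) ∈ S k ∧ ((D k (ι k y) : Dom (k + 1)) : H (k + 1)) = y)) :
    -- `m` is a linear isomorphism in each degree …
    (∀ k, Function.Bijective (fun p : (Dom (k + 1) : Submodule ℂ (H (k + 1))) × A k =>
      (p.1, p.2 + γ k (ι k (PR (k + 1) (p.1 : H (k + 1))))))) ∧
    -- … and `m ∘ d = d̃ ∘ m`, i.e. applying `m` to `d (ω, a) = (∂ω, γ (P ω))` gives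
    -- `d̃ (m (ω, a)) = (∂ω, γ ω)`:
    (∀ k (ω : Dom k),
      γ k ⟨P k (ω : H k), hKDom k (hPmem k (ω : H k))⟩ +
        γ k (ι k (PR (k + 1) ((D k ω : Dom (k + 1)) : H (k + 1)))) = γ k ω) := by
  refine ⟨fun k => (Equiv.prodShear (Equiv.refl _)
    fun ω : Dom (k + 1) => Equiv.addRight (γ k (ι k (PR (k + 1) ω)))).bijective, fun k ω => ?_⟩
  obtain ⟨h, hhK, r, hrR, s, hsS, hsum⟩ := hHodge k ω ω.2
  have hKR : K k ≤ (R k)ᗮ := hK k ▸ inf_le_right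
  set ωh : Dom k := ⟨h, hKDom k hhK⟩
  set ωr : Dom k := ⟨r, range_le_dom hR0 hR k hrR⟩
  set ωs : Dom k := ⟨s, hSDom k hsS⟩
  have hω : ω = ωh + ωr + ωs := Subtype.ext hsum
  have hPω : (⟨P k ω, hKDom k (hPmem k ω)⟩ : Dom k) = ωh :=
    Subtype.ext (hsum ▸ projection_hodge_sum_eq hKR (hSK k) (P k) (hPmem k) (hPorth k) hhK hrR hsS)
  have hDω : D k ω = D k ωs := by
    rw [hω, map_add, map_add, map_eq_zero_of_mem_harmonic (hK k) hhK,
      map_eq_zero_of_mem_range hR0 hR D hcomplex k ωr hrR, zero_add, zero_add]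
  have hDωR : ((D k ω : Dom (k + 1)) : H (k + 1)) ∈ R (k + 1) := hR k ▸ ⟨_, ⟨ω, rfl⟩, rfl⟩
  have hPRω : PR (k + 1) (D k ω) = D k ω :=
    eq_of_mem_of_sub_mem_orthogonal (hPRmem _ _) hDωR (hPRorth _ _) (by simp)
  obtain ⟨hιS, hιD⟩ := hι k _ hDωR
  have hιω : ι k (D k ω) = ωs :=
    eq_of_map_eq_of_mem_coexact (hK k) (hSK k) (hSR k) hιS hsS ((Subtype.ext hιD).trans hDω)
  rw [hPω, hPRω, hιω, hω, map_add, map_add,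
    map_eq_zero_of_mem_range hR0 hR γ hγ k ωr hrR, add_zero]

/-- Let `T* ` be a cochain complex of Hilbert spaces of the form
`Tᵏ = Hᵏ ⊕ Aᵏ⁻¹`, where `H*` carries a closed densely defined differential `∂` (denoted
`D`, mapping `Dom ∂ᵏ` into `Dom ∂ᵏ⁺¹`) and the `Aᵏ` are finite dimensional.  Let
`γ : Dom ∂ᵏ → Aᵏ` be linear maps with `γ ∘ ∂ = 0`.  Assume the Hodge decomposition
`Dom ∂ᵏ = ker Δᵏ ⊕ im ∂ᵏ⁻¹ ⊕ (Dom ∂ᵏ ∩ im ∂*)` holds with `im ∂ᵏ⁻¹` closed, where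
`ker Δᵏ = ker ∂ᵏ ∩ ker (∂ᵏ⁻¹)* = ker ∂ᵏ ∩ (im ∂ᵏ⁻¹)ᗮ`, let `P` be the orthogonal
projection onto `ker Δᵏ`, and define the differentials `d̃ (ω, a) = (∂ω, γ ω)` and
`d (ω, a) = (∂ω, γ (P ω))`.  Then the map
`m (h, ω₁, ω₂, a) = (h, ω₁, ω₂, a + γ (I⁻¹ ω₁))` — realized below as
`(ω, a) ↦ (ω, a + γ (ι (P_R ω)))`, where `P_R` is the orthogonal projection onto the
range component and `ι = I⁻¹` inverts `∂ : im ∂* ∩ Dom ∂ ≅ im ∂` — is a cochain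
isomorphism from `(T, d)` to `(T, d̃)`. -/
theorem stmt7
    (H A : ℕ → Type*)
    [∀ k, NormedAddCommGroup (H k)] [∀ k, InnerProductSpace ℂ (H k)]
    [∀ k, CompleteSpace (H k)]
    [∀ k, AddCommGroup (A k)] [∀ k, Module ℂ (A k)] [∀ k, FiniteDimensional ℂ (A k)]
    (Dom : ∀ k, Submodule ℂ (H k))
    (hdense : ∀ k, Dense ((Dom k : Submodule ℂ (H k)) : Set (H k)))
    (D : ∀ k, (Dom k : Submodule ℂ (H k)) →ₗ[ℂ] (Dom (k + 1) : Submodule ℂ (H (k + 1))))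
    (hcomplex : ∀ k (x : Dom k), D (k + 1) (D k x) = 0)
    (hDclosed : ∀ k, IsClosed {p : H k × H (k + 1) |
      ∃ h : p.1 ∈ Dom k, ((D k ⟨p.1, h⟩ : Dom (k + 1)) : H (k + 1)) = p.2})
    (γ : ∀ k, (Dom k : Submodule ℂ (H k)) →ₗ[ℂ] A k)
    (hγ : ∀ k (x : Dom k), γ (k + 1) (D k x) = 0)
    -- `R k = im ∂ᵏ⁻¹ ⊆ H k`, a closed subspace:
    (R : ∀ k, Submodule ℂ (H k)) (hR0 : R 0 = ⊥)
    (hR : ∀ k, R (k + 1) =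
      Submodule.map (Dom (k + 1)).subtype (LinearMap.range (D k)))
    (hRclosed : ∀ k, IsClosed ((R k : Submodule ℂ (H k)) : Set (H k)))
    -- `K k = ker Δᵏ = ker ∂ᵏ ∩ (im ∂ᵏ⁻¹)ᗮ`:
    (K : ∀ k, Submodule ℂ (H k))
    (hK : ∀ k, K k = Submodule.map (Dom k).subtype (LinearMap.ker (D k)) ⊓ (R k)ᗮ)
    (hKDom : ∀ k, ((K k : Submodule ℂ (H k)) : Set (H k)) ⊆ (Dom k : Set (H k)))
    -- `S k = Dom ∂ᵏ ∩ im ∂*`, the third Hodge summand: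
    (S : ∀ k, Submodule ℂ (H k))
    (hSDom : ∀ k, ((S k : Submodule ℂ (H k)) : Set (H k)) ⊆ (Dom k : Set (H k)))
    (hSK : ∀ k, ∀ x ∈ S k, ∀ y ∈ K k, (inner ℂ x y : ℂ) = 0)
    (hSR : ∀ k, ∀ x ∈ S k, ∀ y ∈ R k, (inner ℂ x y : ℂ) = 0)
    -- the Hodge decomposition `Dom ∂ᵏ = K ⊕ R ⊕ S`:
    (hHodge : ∀ k, ∀ x ∈ Dom k,
      ∃ h ∈ K k, ∃ r ∈ R k, ∃ s ∈ S k, x = h + r + s)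
    -- `P k` is the orthogonal projection onto `K k = ker Δᵏ`:
    (P : ∀ k, H k →L[ℂ] H k)
    (hPmem : ∀ k (x : H k), P k x ∈ K k)
    (hPorth : ∀ k (x : H k), x - P k x ∈ (K k)ᗮ)
    -- `PR k` is the orthogonal projection onto `R k = im ∂`:
    (PR : ∀ k, H k →L[ℂ] H k)
    (hPRmem : ∀ k (x : H k), PR k x ∈ R k)
    (hPRorth : ∀ k (x : H k), x - PR k x ∈ (R k)ᗮ)
    -- `ι k = I⁻¹`, the inverse of the isomorphism `I : S k → R (k+1)` induced by `∂`:
    (ι : ∀ k, H (k + 1) →ₗ[ℂ] (Dom k : Submodule ℂ (H k)))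
    (hι : ∀ k (y : H (k + 1)), y ∈ R (k + 1) →
      ((ι k y : H k) ∈ S k ∧ ((D k (ι k y) : Dom (k + 1)) : H (k + 1)) = y)) :
    -- `m` is a linear isomorphism in each degree …
    (∀ k, Function.Bijective (fun p : (Dom (k + 1) : Submodule ℂ (H (k + 1))) × A k =>
      (p.1, p.2 + γ k (ι k (PR (k + 1) (p.1 : H (k + 1))))))) ∧
    -- … and `m ∘ d = d̃ ∘ m`, i.e. applying `m` to `d (ω, a) = (∂ω, γ (P ω))` gives
    -- `d̃ (m (ω, a)) = (∂ω, γ ω)`: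
    (∀ k (ω : Dom k),
      γ k ⟨P k (ω : H k), hKDom k (hPmem k (ω : H k))⟩ +
        γ k (ι k (PR (k + 1) ((D k ω : Dom (k + 1)) : H (k + 1)))) = γ k ω) :=
  stmt7_general H A Dom D hcomplex γ hγ R hR0 hR K hK hKDom S hSDom hSK hSR hHodge P hPmem hPorth PR
    hPRmem hPRorth ι hι
end
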